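/- arXiv:math/0505214 — 2 statements merged into one kernel-verified Lean document; each statement's English description precedes it below -/
import Mathlib

section
/- Assume Assumption 3.3 holds for v, let b > 0, c₁ > c₂ > 0, and fix 0 < s* < t* with Σ(s*,t*) positive definite. Let (θ₁, θ₂)^T = Σ(s*,t*)^{-1}(b + c₂t*, c₁s*)^T and define the path f*(r) = −θ₁Γ(−r, t*) − θ₂Γ(−r, s*) for r ∈ [−t*, 0]. Assume Ē(s*) − c₁s* > 0 and that for all s ∈ (0,t*): (Ē(s) − c₁s)·v̄(s*) ≤ Γ̄(s, s*)·(Ē(s*) − c₁s*) (condition (22)). Then f*(−s) − f*(−t*) ≥ b + c₂t* − c₁s for all s ∈ (0, t*); that is, the conditioned most probable path lies in the closure of the overflow set S^{t*}. -/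
open Set Matrix
noncomputable section

/-- Γ(u,w) = (v(u) + v(w) − v(|w−u|))/2, the covariance of the inputs over the last u and
the last w time units. -/
def Gam2 (v : ℝ → ℝ) (u w : ℝ) : ℝ := (v u + v w - v |w - u|) / 2

/-- The covariance matrix Σ(s,t): diagonal entries v(t), v(s), off-diagonal Γ(s,t). -/
def SigM (v : ℝ → ℝ) (s t : ℝ) : Matrix (Fin 2) (Fin 2) ℝ :=
  !![v t, Gam2 v s t; Gam2 v s t, v s]

/-- (θ₁, θ₂)ᵀ = Σ(s*,t*)⁻¹ (b + c₂t*, c₁s*)ᵀ. -/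
def theta (b c₁ c₂ : ℝ) (v : ℝ → ℝ) (sstar tstar : ℝ) : Fin 2 → ℝ :=
  (SigM v sstar tstar)⁻¹ *ᵥ ![b + c₂ * tstar, c₁ * sstar]

/-- The conditional mean Ē(s) = Γ(s,t*)(b + c₂t*)/v(t*). -/
def Ebar (b c₂ : ℝ) (v : ℝ → ℝ) (tstar s : ℝ) : ℝ :=
  Gam2 v s tstar * (b + c₂ * tstar) / v tstar

/-- The conditional variance v̄(s) = v(s) − Γ(s,t*)²/v(t*). -/
def vbar (v : ℝ → ℝ) (tstar s : ℝ) : ℝ := v s - (Gam2 v s tstar) ^ 2 / v tstar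

/-- The conditional covariance
Γ̄(s,s') = (v(s)+v(s')−v(|s−s'|))/2 − Γ(s,t*)Γ(s',t*)/v(t*). -/
def Gbar (v : ℝ → ℝ) (tstar s s' : ℝ) : ℝ :=
  (v s + v s' - v |s - s'|) / 2 - Gam2 v s tstar * Gam2 v s' tstar / v tstar

/-- The conditioned most probable path f*(r) = −θ₁Γ(−r,t*) − θ₂Γ(−r,s*). -/
def fstar (b c₁ c₂ : ℝ) (v : ℝ → ℝ) (sstar tstar r : ℝ) : ℝ :=
  -(theta b c₁ c₂ v sstar tstar 0) * Gam2 v (-r) tstar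
    - theta b c₁ c₂ v sstar tstar 1 * Gam2 v (-r) sstar

/-!
Both coordinates of `Σ(s*,t*) θ = (b + c₂t*, c₁s*)` are used. The first gives
`f*(−t*) = −(b + c₂t*)`, so the claim reads `θ₁Γ(s,t*) + θ₂Γ(s,s*) ≤ c₁s`. The second gives
`Ē(s*) − c₁s* = −θ₂ v̄(s*)`, and substituting this into condition (22) turns it into
`v̄(s*) (θ₁Γ(s,t*) + θ₂Γ(s,s*) − c₁s) ≤ 0`, where `v̄(s*) = det Σ(s*,t*) / v(t*) > 0`.
-/

variable {v : ℝ → ℝ}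

theorem Gam2_comm (u w : ℝ) : Gam2 v u w = Gam2 v w u := by
  rw [Gam2, Gam2, abs_sub_comm, add_comm (v u)]

theorem Gam2_self (hv0 : v 0 = 0) (u : ℝ) : Gam2 v u u = v u := by
  simp [Gam2, hv0]

theorem Gbar_eq (t s s' : ℝ) :
    Gbar v t s s' = Gam2 v s s' - Gam2 v s t * Gam2 v s' t / v t := by
  rw [Gbar, abs_sub_comm s s']
  rfl

section PosDef

variable {s t : ℝ} (hPD : (SigM v s t).PosDef)
include hPD

theorem pos_of_SigM_posDef : 0 < v t := hPD.diag_pos (i := 0)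

theorem vbar_pos_of_SigM_posDef : 0 < vbar v t s := by
  have hdet : 0 < v t * v s - Gam2 v s t ^ 2 := by
    simpa [SigM, det_fin_two_of, sq] using hPD.det_pos
  have ht := pos_of_SigM_posDef hPD
  rw [vbar, sub_pos, div_lt_iff₀ ht]
  linarith

variable (b c₁ c₂ : ℝ)

theorem SigM_mulVec_theta : SigM v s t *ᵥ theta b c₁ c₂ v s t = ![b + c₂ * t, c₁ * s] := by
  rw [theta, mulVec_mulVec, mul_nonsing_inv _ hPD.det_pos.ne'.isUnit, one_mulVec]

theorem theta_eq_fst :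
    v t * theta b c₁ c₂ v s t 0 + Gam2 v s t * theta b c₁ c₂ v s t 1 = b + c₂ * t := by
  simpa [SigM, mulVec, dotProduct, Fin.sum_univ_two] using
    congrFun (SigM_mulVec_theta hPD b c₁ c₂) 0

theorem theta_eq_snd :
    Gam2 v s t * theta b c₁ c₂ v s t 0 + v s * theta b c₁ c₂ v s t 1 = c₁ * s := by
  simpa [SigM, mulVec, dotProduct, Fin.sum_univ_two] using
    congrFun (SigM_mulVec_theta hPD b c₁ c₂) 1

theorem fstar_neg_sub_fstar_neg (hv0 : v 0 = 0) (r : ℝ) :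
    fstar b c₁ c₂ v s t (-r) - fstar b c₁ c₂ v s t (-t) =
      b + c₂ * t - (theta b c₁ c₂ v s t 0 * Gam2 v r t + theta b c₁ c₂ v s t 1 * Gam2 v r s) := by
  simp only [fstar, neg_neg, Gam2_self hv0, Gam2_comm t s]
  linarith [theta_eq_fst hPD b c₁ c₂]

theorem Ebar_sub_eq_neg_theta_mul_vbar :
    Ebar b c₂ v t s - c₁ * s = -(theta b c₁ c₂ v s t 1 * vbar v t s) := by
  have ht := (pos_of_SigM_posDef hPD).ne'
  rw [Ebar, ← theta_eq_fst hPD b c₁ c₂, ← theta_eq_snd hPD b c₁ c₂, vbar]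
  field_simp
  ring

theorem condition_sub_eq_vbar_mul (r : ℝ) :
    (Ebar b c₂ v t r - c₁ * r) * vbar v t s - Gbar v t r s * (Ebar b c₂ v t s - c₁ * s) =
      vbar v t s * (theta b c₁ c₂ v s t 0 * Gam2 v r t + theta b c₁ c₂ v s t 1 * Gam2 v r s
        - c₁ * r) := by
  have ht := (pos_of_SigM_posDef hPD).ne'
  rw [Ebar_sub_eq_neg_theta_mul_vbar hPD, Gbar_eq, Ebar, ← theta_eq_fst hPD b c₁ c₂]
  field_simp
  ring

end PosDef

theorem thm_3_11_path_general (b c₁ c₂ : ℝ)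
    (v : ℝ → ℝ) (hv0 : v 0 = 0)
    (sstar tstar : ℝ)
    (hPD : (SigM v sstar tstar).PosDef)
    (hcond : ∀ s ∈ Ioo (0 : ℝ) tstar,
      (Ebar b c₂ v tstar s - c₁ * s) * vbar v tstar sstar ≤
        Gbar v tstar s sstar * (Ebar b c₂ v tstar sstar - c₁ * sstar)) :
    ∀ s ∈ Ioo (0 : ℝ) tstar,
      b + c₂ * tstar - c₁ * s ≤
        fstar b c₁ c₂ v sstar tstar (-s) - fstar b c₁ c₂ v sstar tstar (-tstar) := by
  intro s hs
  have hsum : theta b c₁ c₂ v sstar tstar 0 * Gam2 v s tstar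
      + theta b c₁ c₂ v sstar tstar 1 * Gam2 v s sstar ≤ c₁ * s := by
    have h := sub_nonpos.mpr (hcond s hs)
    rw [condition_sub_eq_vbar_mul hPD] at h
    exact sub_nonpos.mp (nonpos_of_mul_nonpos_right h (vbar_pos_of_SigM_posDef hPD))
  rw [fstar_neg_sub_fstar_neg hPD b c₁ c₂ hv0]
  linarith

/-- Core of Theorem 3.11: under condition (22), the conditioned most probable path f*
satisfies f*(−s) − f*(−t*) ≥ b + c₂t* − c₁s for all s ∈ (0,t*), i.e. it lies in the
closure of the overflow set S^{t*}. -/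
theorem thm_3_11_path (b c₁ c₂ : ℝ) (hb : 0 < b) (hc₂ : 0 < c₂) (hc : c₂ < c₁)
    (v : ℝ → ℝ) (hv0 : v 0 = 0) (hvpos : ∀ u > 0, 0 < v u)
    (hvcont : ContinuousOn v (Ici 0))
    (hC2 : ContDiffOn ℝ 2 (fun u => Real.sqrt (v u)) (Ici 0))
    (hmono : StrictMonoOn (fun u => Real.sqrt (v u)) (Ici 0))
    (hconc : StrictConcaveOn ℝ (Ici 0) (fun u => Real.sqrt (v u)))
    (sstar tstar : ℝ) (hs : 0 < sstar) (hst : sstar < tstar)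
    (hPD : (SigM v sstar tstar).PosDef)
    (hpos : 0 < Ebar b c₂ v tstar sstar - c₁ * sstar)
    (hcond : ∀ s ∈ Ioo (0 : ℝ) tstar,
      (Ebar b c₂ v tstar s - c₁ * s) * vbar v tstar sstar ≤
        Gbar v tstar s sstar * (Ebar b c₂ v tstar sstar - c₁ * sstar)) :
    ∀ s ∈ Ioo (0 : ℝ) tstar,
      b + c₂ * tstar - c₁ * s ≤
        fstar b c₁ c₂ v sstar tstar (-s) - fstar b c₁ c₂ v sstar tstar (-tstar) :=
  thm_3_11_path_general b c₁ c₂ v hv0 sstar tstar hPD hcond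

end
end

section
/- Assume the setup of condition (22): Assumption 3.3 holds for v (in particular v is C² on [0,∞)), b > 0, c₁ > c₂ > 0, 0 < s* < t*, Σ(s*,t*) is positive definite, (θ₁, θ₂)^T = Σ(s*,t*)^{-1}(b + c₂t*, c₁s*)^T, Ē(s*) − c₁s* > 0, and (Ē(s) − c₁s)·v̄(s*) ≤ Γ̄(s, s*)·(Ē(s*) − c₁s*) for all s ∈ (0, t*). Then necessarily θ₁·(v''(t* − s*) − v''(s*)) + θ₂·(v''(0) − v''(s*)) ≥ 0. -/
open Set Matrix
noncomputable section

/-!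
By hypothesis, `F(s) = Γ̄(s, s*) Q - (Ē(s) - c₁ s) v̄(s*)` with `Q = Ē(s*) - c₁ s*` is nonnegative
on `(0, t*)` and vanishes at `s*`, so `s*` is a local minimum of `F`. Expanding, `F` is the
combination `Q Γ(·, s*) - C Γ(·, t*) + K s` for explicit constants `C`, `K`. The kink of
`s ↦ v(|s - s*|)` at `s*` is harmless because `v'(0) = 0` (as `√v` is differentiable at `0`), so
`F` is twice differentiable at `s*` and the second-order condition `F''(s*) ≥ 0` holds. Solving
`Σ θ = (b + c₂ t*, c₁ s*)` by Cramer's rule gives `θ₁ = C v(t*) / det Σ` and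
`θ₂ = -Q v(t*) / det Σ`, so the claimed expression is `F''(s*)` times `2 v(t*) / det Σ > 0`.
-/

open Filter Topology

lemma IsLocalMin.nonneg_of_hasDerivAt_of_hasDerivAt {f f' : ℝ → ℝ} {a D : ℝ}
    (hmin : IsLocalMin f a) (hf : ∀ᶠ x in 𝓝 a, HasDerivAt f (f' x) x)
    (hf' : HasDerivAt f' D a) : 0 ≤ D := by
  by_contra! hD
  have hderiv : deriv f =ᶠ[𝓝 a] f' := hf.mono fun x hx => hx.deriv
  -- By the second-derivative test `a` would also be a local maximum, so `f` is locally constant.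
  have hmax : IsLocalMax f a :=
    isLocalMax_of_deriv_deriv_neg (by rwa [(hf'.congr_of_eventuallyEq hderiv).deriv])
      (by rw [hderiv.eq_of_nhds]; exact hmin.hasDerivAt_eq_zero hf.self_of_nhds)
      hf.self_of_nhds.continuousAt
  have hconst : f =ᶠ[𝓝 a] fun _ => f a :=
    (hmin.and hmax).mono fun x hx => le_antisymm hx.2 hx.1
  have hzero : f' =ᶠ[𝓝 a] fun _ => 0 :=
    hderiv.symm.trans (hconst.deriv.trans (by simp))
  exact hD.ne ((hf'.congr_of_eventuallyEq hzero.symm).unique (hasDerivAt_const a 0))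

lemma HasDerivWithinAt.eq_zero_of_differentiableWithinAt_sqrt {f : ℝ → ℝ} {L x : ℝ}
    {s : Set ℝ} (hf : HasDerivWithinAt f L s x) (hs : UniqueDiffWithinAt ℝ s x)
    (hnonneg : ∀ y ∈ s, 0 ≤ f y) (hx : f x = 0)
    (hsqrt : DifferentiableWithinAt ℝ (fun y => √(f y)) s x) : L = 0 := by
  have hsq := hsqrt.hasDerivWithinAt.mul hsqrt.hasDerivWithinAt
  have hf' : HasDerivWithinAt f 0 s x := by
    refine (hsq.congr (fun y hy => (Real.mul_self_sqrt (hnonneg y hy)).symm) ?_).congr_deriv ?_ <;>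
      simp [hx]
  exact hs.eq_deriv s hf hf'

section AbsExtension

variable {φ φ' : ℝ → ℝ}

lemma HasDerivWithinAt.comp_neg_Iic {L : ℝ} (hφ : HasDerivWithinAt φ L (Ici 0) 0) :
    HasDerivWithinAt (fun x => φ (-x)) (-L) (Iic 0) 0 := by
  have hneg : HasDerivWithinAt (fun x : ℝ => -x) (-1) (Iic 0) 0 :=
    (hasDerivAt_neg' 0).hasDerivWithinAt
  exact (HasDerivWithinAt.comp_of_eq 0 hφ hneg (fun _ hx => neg_nonneg.2 (mem_Iic.1 hx))
    neg_zero.symm).congr_deriv (mul_neg_one L)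

lemma hasDerivAt_comp_abs_of_ne {L y : ℝ} (hφ : HasDerivAt φ L |y|) (hy : y ≠ 0) :
    HasDerivAt (fun x => φ |x|) (SignType.sign y * L) y := by
  rcases hy.lt_or_gt with hy | hy
  · rw [abs_of_neg hy] at hφ
    have h : HasDerivAt (fun x => φ (-x)) (-L) y :=
      (hφ.comp y (hasDerivAt_neg y)).congr_deriv (mul_neg_one L)
    rw [sign_neg hy]
    refine (h.congr_of_eventuallyEq ?_).congr_deriv (by simp)
    filter_upwards [Iio_mem_nhds hy] with x hx using by rw [abs_of_neg hx]
  · rw [abs_of_pos hy] at hφ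
    rw [sign_pos hy]
    refine (hφ.congr_of_eventuallyEq ?_).congr_deriv (by simp)
    filter_upwards [Ioi_mem_nhds hy] with x hx using by rw [abs_of_pos hx]

lemma hasDerivAt_comp_abs (hφ : ∀ u ∈ Ici (0 : ℝ), HasDerivWithinAt φ (φ' u) (Ici 0) u)
    (h0 : φ' 0 = 0) (y : ℝ) :
    HasDerivAt (fun x => φ |x|) (SignType.sign y * φ' |y|) y := by
  rcases eq_or_ne y 0 with rfl | hy
  · have hright : HasDerivWithinAt (fun x => φ |x|) 0 (Ici 0) 0 :=
      (h0 ▸ hφ 0 self_mem_Ici).congr (fun x hx => by rw [abs_of_nonneg hx]) (by simp)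
    have hleft : HasDerivWithinAt (fun x => φ |x|) 0 (Iic 0) 0 := by
      refine ((h0 ▸ hφ 0 self_mem_Ici).comp_neg_Iic.congr (fun x hx => ?_) (by simp)).congr_deriv
        neg_zero
      rw [abs_of_nonpos hx]
    simpa [Iic_union_Ici] using hleft.union hright
  · exact hasDerivAt_comp_abs_of_ne ((hφ _ (abs_nonneg y)).hasDerivAt
      (Ici_mem_nhds (abs_pos.2 hy))) hy

lemma hasDerivAt_sign_mul_comp_abs
    (hφ : ∀ u ∈ Ici (0 : ℝ), HasDerivWithinAt φ (φ' u) (Ici 0) u) (h0 : φ 0 = 0) (y : ℝ) :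
    HasDerivAt (fun x => SignType.sign x * φ |x|) (φ' |y|) y := by
  rcases eq_or_ne y 0 with rfl | hy
  · have hright : HasDerivWithinAt (fun x => SignType.sign x * φ |x|) (φ' 0) (Ici 0) 0 := by
      refine (hφ 0 self_mem_Ici).congr (fun x hx => ?_) (by simp [h0])
      rcases (mem_Ici.1 hx).eq_or_lt with rfl | hx
      · simp [h0]
      · simp [sign_pos hx, abs_of_pos hx]
    have hleft : HasDerivWithinAt (fun x => SignType.sign x * φ |x|) (φ' 0) (Iic 0) 0 := by
      refine ((hφ 0 self_mem_Ici).comp_neg_Iic.neg.congr (fun x hx => ?_)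
        (by simp [h0])).congr_deriv (neg_neg _)
      rcases (mem_Iic.1 hx).eq_or_lt with rfl | hx
      · simp [h0]
      · simp [sign_neg hx, abs_of_neg hx]
    simpa [Iic_union_Ici] using hleft.union hright
  · have h := hasDerivAt_comp_abs_of_ne ((hφ _ (abs_nonneg y)).hasDerivAt
      (Ici_mem_nhds (abs_pos.2 hy))) hy
    refine ((h.const_mul (SignType.sign y : ℝ)).congr_of_eventuallyEq ?_).congr_deriv ?_
    · have hsign := tendsto_pure.1
        (nhds_discrete SignType ▸ (continuousAt_sign_of_ne_zero hy).tendsto)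
      filter_upwards [hsign] with x hx using by rw [hx]
    · rw [← mul_assoc, ← SignType.coe_mul, ← sign_mul, sign_pos (mul_self_pos.2 hy)]
      simp

end AbsExtension

section Covariance

variable {v v' v'' : ℝ → ℝ}

lemma hasDerivAt_gam2_left (hv : ∀ u ∈ Ici (0 : ℝ), HasDerivWithinAt v (v' u) (Ici 0) u)
    (hv'0 : v' 0 = 0) (w : ℝ) {u : ℝ} (hu : 0 < u) :
    HasDerivAt (fun u => Gam2 v u w) ((v' u - SignType.sign (u - w) * v' |u - w|) / 2) u := by
  have hfun : (fun u => Gam2 v u w) = fun u => (v u + v w - v |u - w|) / 2 := by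
    funext u
    rw [Gam2, abs_sub_comm]
  rw [hfun]
  exact ((((hv u hu.le).hasDerivAt (Ici_mem_nhds hu)).add_const (v w)).sub
    ((hasDerivAt_comp_abs hv hv'0 (u - w)).comp_sub_const u w)).div_const 2

lemma hasDerivAt_deriv_gam2_left (hv' : ∀ u ∈ Ici (0 : ℝ), HasDerivWithinAt v' (v'' u) (Ici 0) u)
    (hv'0 : v' 0 = 0) (w : ℝ) {u : ℝ} (hu : 0 < u) :
    HasDerivAt (fun u => (v' u - SignType.sign (u - w) * v' |u - w|) / 2)
      ((v'' u - v'' |u - w|) / 2) u :=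
  (((hv' u hu.le).hasDerivAt (Ici_mem_nhds hu)).sub
    ((hasDerivAt_sign_mul_comp_abs hv' hv'0 (u - w)).comp_sub_const u w)).div_const 2

lemma IsLocalMin.second_deriv_gam2_nonneg
    (hv : ∀ u ∈ Ici (0 : ℝ), HasDerivWithinAt v (v' u) (Ici 0) u)
    (hv' : ∀ u ∈ Ici (0 : ℝ), HasDerivWithinAt v' (v'' u) (Ici 0) u) (hv'0 : v' 0 = 0)
    {s t Q C K : ℝ} (hs : 0 < s)
    (hmin : IsLocalMin (fun u => Q * Gam2 v u s - C * Gam2 v u t + K * u) s) :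
    0 ≤ Q * ((v'' s - v'' 0) / 2) - C * ((v'' s - v'' |s - t|) / 2) := by
  refine IsLocalMin.nonneg_of_hasDerivAt_of_hasDerivAt hmin (f' := fun u =>
      Q * ((v' u - SignType.sign (u - s) * v' |u - s|) / 2) -
        C * ((v' u - SignType.sign (u - t) * v' |u - t|) / 2) + K) ?_ ?_
  · filter_upwards [Ioi_mem_nhds hs] with u hu
    exact ((((hasDerivAt_gam2_left hv hv'0 s hu).const_mul Q).sub
      ((hasDerivAt_gam2_left hv hv'0 t hu).const_mul C)).add
      ((hasDerivAt_id u).const_mul K)).congr_deriv (by simp)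
  · simpa using (((hasDerivAt_deriv_gam2_left hv' hv'0 s hs).const_mul Q).sub
      ((hasDerivAt_deriv_gam2_left hv' hv'0 t hs).const_mul C)).add_const K

end Covariance

lemma gbar_self {v : ℝ → ℝ} (hv0 : v 0 = 0) (t s : ℝ) : Gbar v t s s = vbar v t s := by
  simp only [Gbar, vbar, sub_self, abs_zero, hv0]
  ring

lemma gbar_mul_sub_ebar_mul (b c₁ c₂ : ℝ) (v : ℝ → ℝ) (t s s' Q V : ℝ) :
    Gbar v t s s' * Q - (Ebar b c₂ v t s - c₁ * s) * V =
      Q * Gam2 v s s' - (Q * Gam2 v s' t + (b + c₂ * t) * V) / v t * Gam2 v s t +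
        c₁ * V * s := by
  simp only [Gbar, Ebar, Gam2, abs_sub_comm s' s]
  ring

lemma theta_zero (b c₁ c₂ : ℝ) (v : ℝ → ℝ) (s t : ℝ) :
    theta b c₁ c₂ v s t 0 =
      (v s * (b + c₂ * t) - Gam2 v s t * (c₁ * s)) / (SigM v s t).det := by
  simp [theta, SigM, Matrix.inv_def, Matrix.adjugate_fin_two_of, Matrix.mulVec, dotProduct,
    Fin.sum_univ_two, Ring.inverse_eq_inv', div_eq_mul_inv]
  ring

lemma theta_one (b c₁ c₂ : ℝ) (v : ℝ → ℝ) (s t : ℝ) :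
    theta b c₁ c₂ v s t 1 =
      (v t * (c₁ * s) - Gam2 v s t * (b + c₂ * t)) / (SigM v s t).det := by
  simp [theta, SigM, Matrix.inv_def, Matrix.adjugate_fin_two_of, Matrix.mulVec, dotProduct,
    Fin.sum_univ_two, Ring.inverse_eq_inv', div_eq_mul_inv]
  ring

lemma theta_combination_eq (b c₁ c₂ : ℝ) {v : ℝ → ℝ} {s t : ℝ} (hvt : v t ≠ 0) (x y z : ℝ) :
    theta b c₁ c₂ v s t 0 * (x - z) + theta b c₁ c₂ v s t 1 * (y - z) =
      2 * v t / (SigM v s t).det *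
        ((Ebar b c₂ v t s - c₁ * s) * ((z - y) / 2) -
          ((Ebar b c₂ v t s - c₁ * s) * Gam2 v s t + (b + c₂ * t) * vbar v t s) / v t *
            ((z - x) / 2)) := by
  rw [theta_zero, theta_one, Ebar, vbar]
  field_simp
  ring

theorem lemma_3_12_general (b c₁ c₂ : ℝ)
    (v v' v'' : ℝ → ℝ) (hv0 : v 0 = 0) (hvpos : ∀ u > 0, 0 < v u)
    (hC2 : ContDiffOn ℝ 2 (fun u => Real.sqrt (v u)) (Ici 0))
    (hderiv : ∀ u ∈ Ici (0 : ℝ), HasDerivWithinAt v (v' u) (Ici 0) u)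
    (hderiv2 : ∀ u ∈ Ici (0 : ℝ), HasDerivWithinAt v' (v'' u) (Ici 0) u)
    (sstar tstar : ℝ) (hs : 0 < sstar) (hst : sstar < tstar)
    (hPD : (SigM v sstar tstar).PosDef)
    (hcond : ∀ s ∈ Ioo (0 : ℝ) tstar,
      (Ebar b c₂ v tstar s - c₁ * s) * vbar v tstar sstar ≤
        Gbar v tstar s sstar * (Ebar b c₂ v tstar sstar - c₁ * sstar)) :
    0 ≤ theta b c₁ c₂ v sstar tstar 0 * (v'' (tstar - sstar) - v'' sstar) +
        theta b c₁ c₂ v sstar tstar 1 * (v'' 0 - v'' sstar) := by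
  set Q := Ebar b c₂ v tstar sstar - c₁ * sstar
  set V := vbar v tstar sstar
  have hvt : 0 < v tstar := hvpos tstar (hs.trans hst)
  have hv'0 : v' 0 = 0 :=
    (hderiv 0 self_mem_Ici).eq_zero_of_differentiableWithinAt_sqrt
      (uniqueDiffOn_Ici 0 0 self_mem_Ici)
      (fun y hy => (mem_Ici.1 hy).eq_or_lt.elim (fun h => h ▸ hv0.ge) fun h => (hvpos y h).le)
      hv0 ((hC2.differentiableOn (by norm_num)) 0 self_mem_Ici)
  have hmin : IsLocalMin (fun u => Q * Gam2 v u sstar -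
      (Q * Gam2 v sstar tstar + (b + c₂ * tstar) * V) / v tstar * Gam2 v u tstar +
        c₁ * V * u) sstar := by
    filter_upwards [Ioo_mem_nhds hs hst] with u hu
    simp only [← gbar_mul_sub_ebar_mul, gbar_self hv0]
    linarith [hcond u hu]
  have h2 := IsLocalMin.second_deriv_gam2_nonneg hderiv hderiv2 hv'0 hs hmin
  rw [abs_sub_comm, abs_of_pos (sub_pos.2 hst)] at h2
  rw [theta_combination_eq b c₁ c₂ hvt.ne']
  exact mul_nonneg (div_nonneg (by positivity) hPD.det_pos.le) h2

/-- Lemma 3.12 / condition (24): condition (22) necessarily implies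
θ₁(v''(t*−s*) − v''(s*)) + θ₂(v''(0) − v''(s*)) ≥ 0. -/
theorem lemma_3_12 (b c₁ c₂ : ℝ) (hb : 0 < b) (hc₂ : 0 < c₂) (hc : c₂ < c₁)
    (v v' v'' : ℝ → ℝ) (hv0 : v 0 = 0) (hvpos : ∀ u > 0, 0 < v u)
    (hvcont : ContinuousOn v (Ici 0))
    (hC2 : ContDiffOn ℝ 2 (fun u => Real.sqrt (v u)) (Ici 0))
    (hmono : StrictMonoOn (fun u => Real.sqrt (v u)) (Ici 0))
    (hconc : StrictConcaveOn ℝ (Ici 0) (fun u => Real.sqrt (v u)))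
    (hderiv : ∀ u ∈ Ici (0 : ℝ), HasDerivWithinAt v (v' u) (Ici 0) u)
    (hderiv2 : ∀ u ∈ Ici (0 : ℝ), HasDerivWithinAt v' (v'' u) (Ici 0) u)
    (sstar tstar : ℝ) (hs : 0 < sstar) (hst : sstar < tstar)
    (hPD : (SigM v sstar tstar).PosDef)
    (hpos : 0 < Ebar b c₂ v tstar sstar - c₁ * sstar)
    (hcond : ∀ s ∈ Ioo (0 : ℝ) tstar,
      (Ebar b c₂ v tstar s - c₁ * s) * vbar v tstar sstar ≤
        Gbar v tstar s sstar * (Ebar b c₂ v tstar sstar - c₁ * sstar)) :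
    0 ≤ theta b c₁ c₂ v sstar tstar 0 * (v'' (tstar - sstar) - v'' sstar) +
        theta b c₁ c₂ v sstar tstar 1 * (v'' 0 - v'' sstar) :=
  lemma_3_12_general b c₁ c₂ v v' v'' hv0 hvpos hC2 hderiv hderiv2 sstar tstar hs hst hPD hcond

end
end
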